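/- Consider the homogeneous recursion [a(a+θ_A−1) + b(b+θ_B−1)] g(a,b) = ∑_i a_i(a_i−1) g(a−e_i,b) + ∑_j b_j(b_j−1) g(a,b−e_j) + θ_A ∑_{i,k} a_i P^A_{ki} g(a−e_i+e_k,b) + θ_B ∑_{j,l} b_j P^B_{lj} g(a,b−e_j+e_l) for g : ℕ^K × ℕ^L → ℝ, with θ_A, θ_B > 0, P^A, P^B stochastic matrices, and boundary conditions g(e_i, 0) = 0, g(0, e_j) = 0, g(e_i, e_j) = 0 for all i, j (and g ≡ 0 on configurations with negative entries). Then g(a,b) = 0 for all configurations (a,b). -/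

import Mathlib

/-- Configuration `a - e_i` (with truncated subtraction). -/
def sub1 {K : ℕ} (a : Fin K → ℕ) (i : Fin K) : Fin K → ℕ :=
  Function.update a i (a i - 1)

/-- Configuration `a + e_k`. -/
def add1 {K : ℕ} (a : Fin K → ℕ) (k : Fin K) : Fin K → ℕ :=
  Function.update a k (a k + 1)

/-!
Induct on the total size `n = |a| + |b|`. If `|a|, |b| ≤ 1`, `g(a, b)` is a boundary value.
Otherwise one block has at least two genes, the coalescence terms refer to size `n - 1` and
vanish, and on the level `(|a|, |b|) = (nA, nB)` only mutation terms remain. With the weights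
`w(a) = ∏ 1 / a_i!` one has `w(a - e_i + e_k) (a - e_i + e_k)_k = w(a) a_i`, so against
`w(a) w(b)` a row-stochastic mutation operator has total mass `nA` (resp. `nB`). Summing `|g|`
against these weights gives `(nA (nA - 1) + nB (nB - 1)) S ≤ 0` for
`S = ∑ w(a) w(b) |g(a, b)| ≥ 0`, hence `S = 0`.
-/

open Finset Finset.Nat
open scoped Nat

namespace TwoLocus

variable {K : ℕ}

lemma sum_add1 (a : Fin K → ℕ) (k : Fin K) : ∑ j, add1 a k j = ∑ j, a j + 1 := by
  rw [add1, Finset.sum_update_of_mem (mem_univ k), Fintype.sum_eq_add_sum_compl k a,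
    compl_eq_univ_sdiff]
  ring

lemma sub1_add1 (a : Fin K → ℕ) (i : Fin K) : sub1 (add1 a i) i = a := by
  simp [sub1, add1]

lemma add1_sub1 {a : Fin K → ℕ} {i : Fin K} (h : a i ≠ 0) : add1 (sub1 a i) i = a := by
  simp only [sub1, add1, Function.update_self, Function.update_idem]
  rw [Nat.sub_add_cancel (Nat.one_le_iff_ne_zero.2 h), Function.update_eq_self]

lemma add1_injective (i : Fin K) : Function.Injective (add1 · i) :=
  Function.LeftInverse.injective (g := (sub1 · i)) (sub1_add1 · i)

lemma sum_sub1_add_one {a : Fin K → ℕ} {i : Fin K} (h : a i ≠ 0) :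
    ∑ j, sub1 a i j + 1 = ∑ j, a j := by
  rw [← sum_add1, add1_sub1 h]

lemma eq_zero_or_eq_single_of_sum_le_one {ι : Type*} [Fintype ι] [DecidableEq ι] {a : ι → ℕ}
    (h : ∑ i, a i ≤ 1) : a = 0 ∨ ∃ i, a = Pi.single i 1 := by
  rcases Nat.le_one_iff_eq_zero_or_eq_one.1 h with h0 | h1
  · exact .inl (funext fun i => sum_eq_zero_iff.1 h0 i (mem_univ i))
  · obtain ⟨i, -, hi⟩ := exists_ne_zero_of_sum_ne_zero (h1.symm ▸ one_ne_zero)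
    rw [Fintype.sum_eq_add_sum_compl i] at h1
    have hrest := sum_eq_zero_iff.1 (by omega : ∑ j ∈ {i}ᶜ, a j = 0)
    refine .inr ⟨i, funext fun j => ?_⟩
    by_cases hj : j = i
    · subst hj
      simp only [Pi.single_eq_same]
      omega
    · simp [hj, hrest j (by simpa using hj)]

noncomputable def weight (a : Fin K → ℕ) : ℝ := ∏ i, ((a i)! : ℝ)⁻¹

lemma weight_pos (a : Fin K → ℕ) : 0 < weight a :=
  prod_pos fun i _ => by positivity

lemma weight_add1_mul (a : Fin K → ℕ) (i : Fin K) :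
    weight (add1 a i) * add1 a i i = weight a := by
  have hrest : ∀ j ∈ ({i}ᶜ : Finset (Fin K)), add1 a i j = a j := fun j hj =>
    Function.update_of_ne (by simpa using hj) _ _
  rw [weight, weight, Fintype.prod_eq_mul_prod_compl i, Fintype.prod_eq_mul_prod_compl i,
    prod_congr rfl fun j hj => by rw [hrest j hj]]
  simp only [add1, Function.update_self, Nat.factorial_succ]
  push_cast
  field_simp

lemma sum_antidiagonalTuple_succ_weight_mul (n : ℕ) (i : Fin K) (G : (Fin K → ℕ) → ℝ) :
    ∑ a ∈ antidiagonalTuple K (n + 1), weight a * a i * G a =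
      ∑ c ∈ antidiagonalTuple K n, weight c * G (add1 c i) := by
  symm
  refine sum_of_injOn (add1 · i) (add1_injective i).injOn ?_ ?_ ?_
  · intro c hc
    simp_all [mem_antidiagonalTuple, sum_add1]
  · intro a ha hnot
    suffices a i = 0 by simp [this]
    by_contra h
    refine hnot ⟨sub1 a i, ?_, add1_sub1 h⟩
    rw [mem_antidiagonalTuple] at ha
    rw [mem_coe, mem_antidiagonalTuple]
    have := sum_sub1_add_one h
    omega
  · intro c _
    rw [weight_add1_mul]

lemma sum_weight_mul_apply_add1_sub1 (n : ℕ) (i k : Fin K) (F : (Fin K → ℕ) → ℝ) :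
    ∑ a ∈ antidiagonalTuple K n, weight a * a i * F (add1 (sub1 a i) k) =
      ∑ a ∈ antidiagonalTuple K n, weight a * a k * F a := by
  cases n with
  | zero => simp [antidiagonalTuple_zero_right]
  | succ n =>
    rw [sum_antidiagonalTuple_succ_weight_mul, sum_antidiagonalTuple_succ_weight_mul]
    simp only [sub1_add1]

def mutationSum (P : Matrix (Fin K) (Fin K) ℝ) (F : (Fin K → ℕ) → ℝ)
    (a : Fin K → ℕ) : ℝ :=
  ∑ i, ∑ k, (a i : ℝ) * P k i * F (add1 (sub1 a i) k)

lemma sum_weight_mul_mutationSum {P : Matrix (Fin K) (Fin K) ℝ} (hP : ∀ k, ∑ i, P k i = 1)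
    (n : ℕ) (F : (Fin K → ℕ) → ℝ) :
    ∑ a ∈ antidiagonalTuple K n, weight a * mutationSum P F a =
      n * ∑ a ∈ antidiagonalTuple K n, weight a * F a := by
  calc ∑ a ∈ antidiagonalTuple K n, weight a * mutationSum P F a
      = ∑ i, ∑ k, P k i *
          ∑ a ∈ antidiagonalTuple K n, weight a * a i * F (add1 (sub1 a i) k) := by
        simp only [mutationSum, mul_sum]
        rw [sum_comm]
        refine sum_congr rfl fun i _ => ?_
        rw [sum_comm]
        exact sum_congr rfl fun k _ => sum_congr rfl fun a _ => by ring
    _ = ∑ k, ∑ a ∈ antidiagonalTuple K n, weight a * a k * F a := by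
        rw [sum_comm]
        simp only [sum_weight_mul_apply_add1_sub1, ← sum_mul, hP, one_mul]
    _ = n * ∑ a ∈ antidiagonalTuple K n, weight a * F a := by
        rw [sum_comm, mul_sum]
        refine sum_congr rfl fun a ha => ?_
        rw [← (mem_antidiagonalTuple.1 ha), Nat.cast_sum, sum_mul]
        exact sum_congr rfl fun k _ => by ring

lemma abs_mutationSum_le {P : Matrix (Fin K) (Fin K) ℝ} (hP : ∀ k i, 0 ≤ P k i)
    (F : (Fin K → ℕ) → ℝ) (a : Fin K → ℕ) :
    |mutationSum P F a| ≤ mutationSum P (|F ·|) a := by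
  refine (abs_sum_le_sum_abs _ _).trans (sum_le_sum fun i _ => ?_)
  refine (abs_sum_le_sum_abs _ _).trans (le_of_eq (sum_congr rfl fun k _ => ?_))
  rw [abs_mul, abs_mul, Nat.abs_cast, abs_of_nonneg (hP k i)]

def coalescenceSum (F : (Fin K → ℕ) → ℝ) (a : Fin K → ℕ) : ℝ :=
  ∑ i, (a i : ℝ) * ((a i : ℝ) - 1) * F (sub1 a i)

lemma coalescenceSum_eq_zero {F : (Fin K → ℕ) → ℝ} {a : Fin K → ℕ}
    (h : ∀ i, 2 ≤ a i → F (sub1 a i) = 0) : coalescenceSum F a = 0 := by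
  refine sum_eq_zero fun i _ => ?_
  rcases lt_or_ge (a i) 2 with hi | hi
  · interval_cases a i <;> simp
  · simp [h i hi]

lemma natCast_mul_sub_one_nonneg (m : ℕ) : 0 ≤ (m : ℝ) * (m - 1) := by
  rcases m with _ | m
  · simp
  · push_cast
    simp only [add_sub_cancel_right]
    positivity

variable {L : ℕ}

noncomputable def weightedPairSum (nA nB : ℕ) (f : (Fin K → ℕ) → (Fin L → ℕ) → ℝ) :
    ℝ :=
  ∑ a ∈ antidiagonalTuple K nA, ∑ b ∈ antidiagonalTuple L nB, weight a * weight b * f a b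

lemma weightedPairSum_nonneg {nA nB : ℕ} {f : (Fin K → ℕ) → (Fin L → ℕ) → ℝ}
    (hf : ∀ a b, 0 ≤ f a b) : 0 ≤ weightedPairSum nA nB f :=
  sum_nonneg fun a _ => sum_nonneg fun b _ =>
    mul_nonneg (mul_pos (weight_pos a) (weight_pos b)).le (hf a b)

lemma weightedPairSum_eq_zero_iff {nA nB : ℕ} {f : (Fin K → ℕ) → (Fin L → ℕ) → ℝ}
    (hf : ∀ a b, 0 ≤ f a b) :
    weightedPairSum nA nB f = 0 ↔
      ∀ a ∈ antidiagonalTuple K nA, ∀ b ∈ antidiagonalTuple L nB, f a b = 0 := by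
  have hterm : ∀ a b, 0 ≤ weight a * weight b * f a b := fun a b =>
    mul_nonneg (mul_pos (weight_pos a) (weight_pos b)).le (hf a b)
  rw [weightedPairSum, sum_eq_zero_iff_of_nonneg fun a _ => sum_nonneg fun b _ => hterm a b]
  refine forall₂_congr fun a _ => ?_
  rw [sum_eq_zero_iff_of_nonneg fun b _ => hterm a b]
  exact forall₂_congr fun b _ =>
    mul_eq_zero_iff_left (mul_pos (weight_pos a) (weight_pos b)).ne'

lemma weightedPairSum_mutationSum_left {P : Matrix (Fin K) (Fin K) ℝ}
    (hP : ∀ k, ∑ i, P k i = 1) (nA nB : ℕ) (f : (Fin K → ℕ) → (Fin L → ℕ) → ℝ) :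
    weightedPairSum nA nB (fun a b => mutationSum P (f · b) a) =
      nA * weightedPairSum nA nB f := by
  rw [weightedPairSum, weightedPairSum, sum_comm, sum_comm (γ := Fin K → ℕ), mul_sum]
  refine sum_congr rfl fun b _ => ?_
  simp only [mul_comm (weight _) (weight b), mul_assoc, ← mul_sum,
    sum_weight_mul_mutationSum hP]
  ring

lemma weightedPairSum_mutationSum_right {P : Matrix (Fin L) (Fin L) ℝ}
    (hP : ∀ l, ∑ j, P l j = 1) (nA nB : ℕ) (f : (Fin K → ℕ) → (Fin L → ℕ) → ℝ) :
    weightedPairSum nA nB (fun a b => mutationSum P (f a ·) b) =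
      nB * weightedPairSum nA nB f := by
  rw [weightedPairSum, weightedPairSum, mul_sum]
  refine sum_congr rfl fun a _ => ?_
  simp only [mul_assoc, ← mul_sum, sum_weight_mul_mutationSum hP]
  ring

theorem eq_zero_of_le_mutationSum {θA θB : ℝ} {PA : Matrix (Fin K) (Fin K) ℝ}
    {PB : Matrix (Fin L) (Fin L) ℝ} (hPA : ∀ k, ∑ i, PA k i = 1)
    (hPB : ∀ l, ∑ j, PB l j = 1)
    {Φ : (Fin K → ℕ) → (Fin L → ℕ) → ℝ} (hΦ : ∀ a b, 0 ≤ Φ a b) {nA nB : ℕ}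
    (hn : 2 ≤ nA ∨ 2 ≤ nB)
    (hle : ∀ a ∈ antidiagonalTuple K nA, ∀ b ∈ antidiagonalTuple L nB,
      (nA * (nA + θA - 1) + nB * (nB + θB - 1) : ℝ) * Φ a b ≤
        θA * mutationSum PA (Φ · b) a + θB * mutationSum PB (Φ a ·) b) :
    ∀ a ∈ antidiagonalTuple K nA, ∀ b ∈ antidiagonalTuple L nB, Φ a b = 0 := by
  set S := weightedPairSum nA nB Φ with hSdef
  have hS_le : (nA * (nA + θA - 1) + nB * (nB + θB - 1) : ℝ) * S ≤
      θA * (nA * S) + θB * (nB * S) := by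
    rw [← weightedPairSum_mutationSum_left hPA, ← weightedPairSum_mutationSum_right hPB,
      weightedPairSum, weightedPairSum, hSdef, weightedPairSum]
    simp only [mul_sum, ← sum_add_distrib]
    refine sum_le_sum fun a ha => sum_le_sum fun b hb => ?_
    have := mul_le_mul_of_nonneg_left (hle a ha b hb)
      (mul_pos (weight_pos a) (weight_pos b)).le
    linarith
  have hd : 0 < (nA * (nA - 1) + nB * (nB - 1) : ℝ) := by
    rcases hn with h | h
    · have : (2 : ℝ) ≤ nA := by exact_mod_cast h
      nlinarith [natCast_mul_sub_one_nonneg nB]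
    · have : (2 : ℝ) ≤ nB := by exact_mod_cast h
      nlinarith [natCast_mul_sub_one_nonneg nA]
  have hS : S = 0 :=
    le_antisymm (nonpos_of_mul_nonpos_right (by linarith) hd) (weightedPairSum_nonneg hΦ)
  exact (weightedPairSum_eq_zero_iff hΦ).1 hS

def IsSolution (θA θB : ℝ) (PA : Matrix (Fin K) (Fin K) ℝ) (PB : Matrix (Fin L) (Fin L) ℝ)
    (g : (Fin K → ℕ) → (Fin L → ℕ) → ℝ) : Prop :=
  ∀ a b, ((∑ i, (a i : ℝ)) * ((∑ i, (a i : ℝ)) + θA - 1) +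
      (∑ j, (b j : ℝ)) * ((∑ j, (b j : ℝ)) + θB - 1)) * g a b =
    coalescenceSum (g · b) a + coalescenceSum (g a ·) b +
      θA * mutationSum PA (g · b) a + θB * mutationSum PB (g a ·) b

theorem IsSolution.eq_zero_of_eq_zero_below {θA θB : ℝ} {PA : Matrix (Fin K) (Fin K) ℝ}
    {PB : Matrix (Fin L) (Fin L) ℝ} {g : (Fin K → ℕ) → (Fin L → ℕ) → ℝ}
    (hg : IsSolution θA θB PA PB g) (hθA : 0 ≤ θA) (hθB : 0 ≤ θB)
    (hPA : ∀ k i, 0 ≤ PA k i) (hPArow : ∀ k, ∑ i, PA k i = 1)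
    (hPB : ∀ l j, 0 ≤ PB l j) (hPBrow : ∀ l, ∑ j, PB l j = 1) {nA nB : ℕ}
    (hn : 2 ≤ nA ∨ 2 ≤ nB)
    (hbelow : ∀ a b, ∑ i, a i + ∑ j, b j + 1 = nA + nB → g a b = 0) :
    ∀ a ∈ antidiagonalTuple K nA, ∀ b ∈ antidiagonalTuple L nB, g a b = 0 := by
  refine fun a ha b hb => abs_eq_zero.1 <|
    eq_zero_of_le_mutationSum (θA := θA) (θB := θB) hPArow hPBrow
      (fun a b => abs_nonneg (g a b)) hn ?_ a ha b hb
  intro a ha b hb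
  rw [mem_antidiagonalTuple] at ha hb
  have hcoalA : coalescenceSum (g · b) a = 0 :=
    coalescenceSum_eq_zero fun i hi => hbelow _ _ (by
      have := sum_sub1_add_one (a := a) (i := i) (by omega)
      omega)
  have hcoalB : coalescenceSum (g a ·) b = 0 :=
    coalescenceSum_eq_zero fun j hj => hbelow _ _ (by
      have := sum_sub1_add_one (a := b) (i := j) (by omega)
      omega)
  have hrec := hg a b
  rw [hcoalA, hcoalB, zero_add, zero_add, ← Nat.cast_sum, ← Nat.cast_sum, ha, hb] at hrec
  calc (nA * (nA + θA - 1) + nB * (nB + θB - 1) : ℝ) * |g a b|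
      ≤ |(nA * (nA + θA - 1) + nB * (nB + θB - 1) : ℝ) * g a b| := by
        rw [abs_mul]
        exact mul_le_mul_of_nonneg_right (le_abs_self _) (abs_nonneg _)
    _ ≤ θA * |mutationSum PA (g · b) a| + θB * |mutationSum PB (g a ·) b| := by
        rw [hrec]
        refine (abs_add_le _ _).trans_eq ?_
        rw [abs_mul, abs_mul, abs_of_nonneg hθA, abs_of_nonneg hθB]
    _ ≤ θA * mutationSum PA (fun x => |g x b|) a + θB * mutationSum PB (fun y => |g a y|) b :=
        add_le_add (mul_le_mul_of_nonneg_left (abs_mutationSum_le hPA _ _) hθA)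
          (mul_le_mul_of_nonneg_left (abs_mutationSum_le hPB _ _) hθB)

end TwoLocus

open TwoLocus in
/-- Uniqueness for the homogeneous two-locus recursion: if `g` satisfies the
neutral recursion with stochastic mutation matrices `P^A`, `P^B` and `θ_A,
θ_B > 0`, and all boundary values (configurations of total size 1 and 2 with
no doubly-specified gametes) vanish, then `g` vanishes on every sample
configuration. -/
theorem stmt8 (K L : ℕ) (θA θB : ℝ) (hθA : 0 < θA) (hθB : 0 < θB)
    (PA : Matrix (Fin K) (Fin K) ℝ) (PB : Matrix (Fin L) (Fin L) ℝ)
    (hPA : ∀ k i, 0 ≤ PA k i) (hPArow : ∀ k, ∑ i, PA k i = 1)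
    (hPB : ∀ l j, 0 ≤ PB l j) (hPBrow : ∀ l, ∑ j, PB l j = 1)
    (g : (Fin K → ℕ) → (Fin L → ℕ) → ℝ)
    (hrec : ∀ (a : Fin K → ℕ) (b : Fin L → ℕ),
      ((∑ i, (a i : ℝ)) * ((∑ i, (a i : ℝ)) + θA - 1) +
          (∑ j, (b j : ℝ)) * ((∑ j, (b j : ℝ)) + θB - 1)) * g a b =
        (∑ i, (a i : ℝ) * ((a i : ℝ) - 1) * g (sub1 a i) b) +
          (∑ j, (b j : ℝ) * ((b j : ℝ) - 1) * g a (sub1 b j)) +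
          θA * ∑ i, ∑ k, (a i : ℝ) * PA k i * g (add1 (sub1 a i) k) b +
          θB * ∑ j, ∑ l, (b j : ℝ) * PB l j * g a (add1 (sub1 b j) l))
    (hb1 : ∀ i, g (Pi.single i 1) 0 = 0)
    (hb2 : ∀ j, g 0 (Pi.single j 1) = 0)
    (hb3 : ∀ i j, g (Pi.single i 1) (Pi.single j 1) = 0) :
    ∀ (a : Fin K → ℕ) (b : Fin L → ℕ), 1 ≤ (∑ i, a i) + ∑ j, b j → g a b = 0 := by
  intro a b hab
  induction hn : ∑ i, a i + ∑ j, b j using Nat.strong_induction_on generalizing a b with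
  | _ n IH =>
  by_cases hsmall : ∑ i, a i ≤ 1 ∧ ∑ j, b j ≤ 1
  · rcases eq_zero_or_eq_single_of_sum_le_one hsmall.1 with rfl | ⟨i, rfl⟩ <;>
      rcases eq_zero_or_eq_single_of_sum_le_one hsmall.2 with rfl | ⟨j, rfl⟩
    · simp at hab
    · exact hb2 j
    · exact hb1 i
    · exact hb3 i j
  · exact IsSolution.eq_zero_of_eq_zero_below hrec hθA.le hθB.le hPA hPArow hPB hPBrow (by omega)
      (fun a' b' h => IH _ (by omega) a' b' (by omega) rfl) a (mem_antidiagonalTuple.2 rfl)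
      b (mem_antidiagonalTuple.2 rfl)
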